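/- arXiv:math/0303039 — 2 statements merged into one kernel-verified Lean document; each statement's English description precedes it below -/
import Mathlib

section
/- There exists a constant C > 0 such that for every a ∈ ℝ⁴₊ with d_a = a₄ > 0, the Neumann Green's function G(x,y) = |x−y|^{−2} + |x̄−y|^{−2} of ℝ⁴₊ satisfies ∫_{∂ℝ⁴₊} G(x,y) |a−x|^{−3} dx ≤ C / d_a² for all y ∈ ℝ⁴₊, where the integral is with respect to 3-dimensional Lebesgue measure on the boundary. -/
open MeasureTheory

open Metric Set Module

set_option maxHeartbeats 1000000

/-- The inclusion of the boundary `ℝ³ ≅ ∂ℝ⁴₊` into `ℝ⁴`. -/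
noncomputable def boundaryEmb (x : EuclideanSpace ℝ (Fin 3)) : EuclideanSpace ℝ (Fin 4) :=
  (WithLp.equiv 2 (Fin 4 → ℝ)).symm (fun i => if h : (i : ℕ) < 3 then x ⟨i, h⟩ else 0)

namespace GreenAux

abbrev E3 := EuclideanSpace ℝ (Fin 3)
abbrev E4 := EuclideanSpace ℝ (Fin 4)

lemma norm_sq_eq {n : ℕ} (v : EuclideanSpace ℝ (Fin n)) : ‖v‖ ^ 2 = ∑ i, v i ^ 2 := by
  rw [EuclideanSpace.norm_eq, Real.sq_sqrt (by positivity)]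
  simp [Real.norm_eq_abs, sq_abs]

noncomputable def proj (y : E4) : E3 :=
  (WithLp.equiv 2 (Fin 3 → ℝ)).symm (fun i => y i.castSucc)

@[simp] lemma proj_apply (y : E4) (i : Fin 3) : proj y i = y i.castSucc := rfl

lemma norm_boundaryEmb_sub_sq (x : E3) (y : E4) :
    ‖boundaryEmb x - y‖ ^ 2 = ‖x - proj y‖ ^ 2 + (y 3) ^ 2 := by
  rw [norm_sq_eq, norm_sq_eq, Fin.sum_univ_four, Fin.sum_univ_three]
  simp only [PiLp.sub_apply, show boundaryEmb x 0 = x 0 from rfl,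
    show boundaryEmb x 1 = x 1 from rfl, show boundaryEmb x 2 = x 2 from rfl,
    show boundaryEmb x 3 = 0 from rfl, show proj y 0 = y 0 from rfl,
    show proj y 1 = y 1 from rfl, show proj y 2 = y 2 from rfl]
  ring


noncomputable def h1 (v : E3) : ℝ := (closedBall (0:E3) 1).indicator (fun v => (‖v‖ ^ 2)⁻¹) v
noncomputable def h2 (v : E3) : ℝ := ((1 + ‖v‖) ^ 5)⁻¹

lemma h1_nonneg (v : E3) : 0 ≤ h1 v := Set.indicator_nonneg (fun v _ => by positivity) v
lemma h2_nonneg (v : E3) : 0 ≤ h2 v := by unfold h2; positivity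

lemma integrable_h2 : Integrable h2 := by
  have h := integrable_one_add_norm (E := E3) (μ := volume) (r := 5)
    (by rw [finrank_euclideanSpace_fin]; norm_num)
  refine h.congr (Filter.Eventually.of_forall fun v => ?_)
  show (1 + ‖v‖) ^ (-5:ℝ) = h2 v
  rw [Real.rpow_neg (by positivity)]
  rw [show (5:ℝ) = ((5:ℕ):ℝ) by norm_num, Real.rpow_natCast]; rfl

lemma integrable_h1 : Integrable h1 := by
  unfold h1
  rw [integrable_indicator_iff measurableSet_closedBall]
  refine ⟨(Measurable.aestronglyMeasurable (by fun_prop)), ?_⟩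
  rw [hasFiniteIntegral_iff_ofReal (Filter.Eventually.of_forall fun v => by positivity)]
  rw [lintegral_eq_lintegral_meas_le _ (Filter.Eventually.of_forall fun v => by positivity)
    ((Measurable.aemeasurable (by fun_prop)))]
  have hsub : ∀ t : ℝ, 0 < t → {a : E3 | t ≤ (‖a‖ ^ 2)⁻¹} ⊆ closedBall 0 (Real.sqrt t⁻¹) := by
    intro t ht a ha
    simp only [Set.mem_setOf_eq] at ha
    rw [mem_closedBall, dist_zero_right]
    rcases eq_or_ne a 0 with rfl | h0
    · simpa using Real.sqrt_nonneg _
    · have hn : 0 < ‖a‖ := norm_pos_iff.mpr h0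
      have hsq : ‖a‖ ^ 2 ≤ t⁻¹ := by
        have h1 : t * ‖a‖ ^ 2 ≤ 1 := by
          have := mul_le_mul_of_nonneg_right ha (le_of_lt (pow_pos hn 2))
          rwa [inv_mul_cancel₀ (by positivity)] at this
        rw [← one_div, le_div_iff₀ ht]; linarith [mul_comm t (‖a‖^2)]
      calc ‖a‖ = Real.sqrt (‖a‖ ^ 2) := (Real.sqrt_sq hn.le).symm
        _ ≤ Real.sqrt t⁻¹ := Real.sqrt_le_sqrt hsq
  have hmeasset : ∀ t : ℝ, MeasurableSet {a : E3 | t ≤ (‖a‖ ^ 2)⁻¹} := by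
    intro t
    exact measurableSet_le measurable_const (by fun_prop)
  calc ∫⁻ t in Ioi 0, (volume.restrict (closedBall (0:E3) 1)) {a | t ≤ (‖a‖ ^ 2)⁻¹}
      ≤ ∫⁻ t in Ioc 0 1 ∪ Ioi 1, (volume.restrict (closedBall (0:E3) 1)) {a | t ≤ (‖a‖ ^ 2)⁻¹} :=
        lintegral_mono_set Ioi_subset_Ioc_union_Ioi
    _ ≤ (∫⁻ t in Ioc 0 1, (volume.restrict (closedBall (0:E3) 1)) {a | t ≤ (‖a‖ ^ 2)⁻¹})
        + ∫⁻ t in Ioi 1, (volume.restrict (closedBall (0:E3) 1)) {a | t ≤ (‖a‖ ^ 2)⁻¹} :=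
        lintegral_union_le _ _ _
    _ < ⊤ := by
        refine ENNReal.add_lt_top.2 ⟨?_, ?_⟩
        · calc (∫⁻ t in Ioc 0 1, (volume.restrict (closedBall (0:E3) 1)) {a | t ≤ (‖a‖ ^ 2)⁻¹})
              ≤ ∫⁻ _ in Ioc (0:ℝ) 1, volume (closedBall (0:E3) 1) := by
                refine setLIntegral_mono' measurableSet_Ioc fun t ht => ?_
                rw [Measure.restrict_apply (hmeasset t)]
                exact measure_mono inter_subset_right
            _ = volume (closedBall (0:E3) 1) * volume (Ioc (0:ℝ) 1) := setLIntegral_const _ _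
            _ < ⊤ := ENNReal.mul_lt_top measure_closedBall_lt_top (by simp [Real.volume_Ioc])
        · have hbd : ∀ t ∈ Ioi (1:ℝ), (volume.restrict (closedBall (0:E3) 1)) {a | t ≤ (‖a‖ ^ 2)⁻¹}
              ≤ ENNReal.ofReal (t ^ (-(3:ℝ)/2)) * volume (ball (0:E3) 1) := by
            intro t ht
            have ht0 : (0:ℝ) < t := lt_trans one_pos ht
            calc (volume.restrict (closedBall (0:E3) 1)) {a | t ≤ (‖a‖ ^ 2)⁻¹}
                ≤ volume (closedBall (0:E3) (Real.sqrt t⁻¹)) := by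
                  rw [Measure.restrict_apply (hmeasset t)]
                  exact measure_mono (inter_subset_left.trans (hsub t ht0))
              _ = ENNReal.ofReal ((Real.sqrt t⁻¹) ^ finrank ℝ E3) * volume (ball (0:E3) 1) :=
                  Measure.addHaar_closedBall _ _ (Real.sqrt_nonneg _)
              _ = ENNReal.ofReal (t ^ (-(3:ℝ)/2)) * volume (ball (0:E3) 1) := by
                  congr 1
                  rw [finrank_euclideanSpace_fin]
                  rw [Real.sqrt_eq_rpow, ← Real.rpow_natCast (t⁻¹ ^ ((1:ℝ)/2)) 3,
                    ← Real.rpow_mul (by positivity), ← Real.rpow_neg_one t,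
                    ← Real.rpow_mul ht0.le]
                  norm_num
          calc (∫⁻ t in Ioi 1, (volume.restrict (closedBall (0:E3) 1)) {a | t ≤ (‖a‖ ^ 2)⁻¹})
              ≤ ∫⁻ t in Ioi (1:ℝ), ENNReal.ofReal (t ^ (-(3:ℝ)/2)) * volume (ball (0:E3) 1) :=
                setLIntegral_mono' measurableSet_Ioi hbd
            _ = (∫⁻ t in Ioi (1:ℝ), ENNReal.ofReal (t ^ (-(3:ℝ)/2))) * volume (ball (0:E3) 1) :=
                lintegral_mul_const' _ _ measure_ball_lt_top.ne
            _ < ⊤ := ENNReal.mul_lt_top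
                ((integrableOn_Ioi_rpow_of_lt (by norm_num) one_pos).setLIntegral_lt_top)
                measure_ball_lt_top

noncomputable def C0 : ℝ := (∫ v, h1 v) + 48 * ∫ v : E3, h2 v

lemma C0_nonneg : 0 ≤ C0 := by
  have a1 : 0 ≤ ∫ v, h1 v := integral_nonneg h1_nonneg
  have a2 : 0 ≤ ∫ v : E3, h2 v := integral_nonneg h2_nonneg
  unfold C0; linarith

lemma key (b : E3) (σ : ℝ) :
    ∫ u : E3, ((‖u - b‖ ^ 2 + σ ^ 2)⁻¹ * ((Real.sqrt (‖u‖ ^ 2 + 1)) ^ 3)⁻¹) ≤ C0 := by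
  set G : E3 → ℝ := fun u => h1 (u - b) + (16 * h2 u + 32 * h2 (u - b)) with hG
  have hint1 : Integrable (fun u : E3 => h1 (u - b)) := integrable_h1.comp_sub_right b
  have hint2 : Integrable h2 := integrable_h2
  have hint3 : Integrable (fun u : E3 => h2 (u - b)) := integrable_h2.comp_sub_right b
  have hGint : Integrable G := hint1.add ((hint2.const_mul 16).add (hint3.const_mul 32))
  have hb : ∀ᵐ u : E3, u ≠ b := by
    have : volume {b} = 0 := measure_singleton b
    rw [ae_iff]
    simpa [Set.setOf_eq_eq_singleton] using this
  have hle : ∀ᵐ u : E3,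
      (‖u - b‖ ^ 2 + σ ^ 2)⁻¹ * ((Real.sqrt (‖u‖ ^ 2 + 1)) ^ 3)⁻¹ ≤ G u := by
    filter_upwards [hb] with u hu
    set r := ‖u - b‖ with hrdef
    set s := ‖u‖ with hsdef
    set S := Real.sqrt (s ^ 2 + 1) with hSdef
    have hs0 : 0 ≤ s := norm_nonneg u
    have hr0 : 0 < r := norm_pos_iff.mpr (sub_ne_zero.mpr hu)
    have hSsq : S ^ 2 = s ^ 2 + 1 := Real.sq_sqrt (by positivity)
    have hSnn : 0 ≤ S := Real.sqrt_nonneg _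
    have hS1 : 1 ≤ S := by nlinarith
    have hSs : s ≤ S := by nlinarith
    have hS0 : (0:ℝ) < S := lt_of_lt_of_le one_pos hS1
    have hfirst : (r ^ 2 + σ ^ 2)⁻¹ ≤ (r ^ 2)⁻¹ := by
      apply inv_anti₀ (by positivity)
      nlinarith
    have hother1 : 0 ≤ h1 (u - b) := h1_nonneg _
    have hother2 : 0 ≤ h2 u := h2_nonneg _
    have hother3 : 0 ≤ h2 (u - b) := h2_nonneg _
    by_cases hc1 : r ≤ 1
    · have hmem : u - b ∈ closedBall (0:E3) 1 := by
        rw [mem_closedBall, dist_zero_right]; exact hc1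
      have hval : h1 (u - b) = (r ^ 2)⁻¹ := by
        unfold h1; rw [Set.indicator_of_mem hmem]
      have : (r ^ 2 + σ ^ 2)⁻¹ * (S ^ 3)⁻¹ ≤ (r ^ 2)⁻¹ * 1 := by
        apply mul_le_mul hfirst _ (by positivity) (by positivity)
        rw [inv_le_one_iff₀]
        right; nlinarith
      rw [hG]; dsimp only
      rw [hval]
      nlinarith
    · push_neg at hc1
      by_cases hc2 : (1 + s) / 2 ≤ r
      · -- middle regime : bound by 16 * h2 u
        have h1s : (0:ℝ) < 1 + s := by linarith
        have hS3 : (1 + s) ^ 3 ≤ 4 * S ^ 3 := by nlinarith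
        have hr2 : (1 + s) ^ 2 ≤ 4 * r ^ 2 := by nlinarith
        have e1 : (r ^ 2 + σ ^ 2)⁻¹ ≤ 4 / (1 + s) ^ 2 := by
          rw [div_eq_mul_inv]
          calc (r ^ 2 + σ ^ 2)⁻¹ ≤ (r ^ 2)⁻¹ := hfirst
            _ ≤ 4 * ((1 + s) ^ 2)⁻¹ := by
                rw [← div_eq_mul_inv, le_div_iff₀ (by positivity), inv_mul_eq_div,
                  div_le_iff₀ (by positivity)]
                nlinarith
        have e2 : (S ^ 3)⁻¹ ≤ 4 / (1 + s) ^ 3 := by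
          rw [le_div_iff₀ (by positivity), inv_mul_eq_div, div_le_iff₀ (by positivity)]
          nlinarith
        have : (r ^ 2 + σ ^ 2)⁻¹ * (S ^ 3)⁻¹ ≤ (4 / (1 + s) ^ 2) * (4 / (1 + s) ^ 3) :=
          mul_le_mul e1 e2 (by positivity) (by positivity)
        have hh2u : h2 u = ((1 + s) ^ 5)⁻¹ := rfl
        have heq : (4 / (1 + s) ^ 2) * (4 / (1 + s) ^ 3) = 16 * h2 u := by
          rw [hh2u, div_mul_div_comm, ← pow_add]
          norm_num [div_eq_mul_inv]
        rw [hG]; dsimp only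
        nlinarith [this, heq]
      · -- far regime : bound by 32 * h2 (u - b)
        push_neg at hc2
        have hsr : r ≤ s := by linarith
        have hS3 : r ^ 3 ≤ S ^ 3 := by
          apply pow_le_pow_left₀ hr0.le (le_trans hsr hSs)
        have e2 : (S ^ 3)⁻¹ ≤ (r ^ 3)⁻¹ := by
          apply inv_anti₀ (by positivity) hS3
        have hmain : (r ^ 2 + σ ^ 2)⁻¹ * (S ^ 3)⁻¹ ≤ (r ^ 5)⁻¹ := by
          calc (r ^ 2 + σ ^ 2)⁻¹ * (S ^ 3)⁻¹ ≤ (r ^ 2)⁻¹ * (r ^ 3)⁻¹ :=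
              mul_le_mul hfirst e2 (by positivity) (by positivity)
            _ = (r ^ 5)⁻¹ := by rw [← mul_inv, ← pow_add]
        have hpow : (1 + r) ^ 5 ≤ 32 * r ^ 5 := by
          calc (1 + r) ^ 5 ≤ (2 * r) ^ 5 := pow_le_pow_left₀ (by linarith) (by linarith) 5
            _ = 32 * r ^ 5 := by ring
        have hh2r : h2 (u - b) = ((1 + r) ^ 5)⁻¹ := rfl
        have e3 : (r ^ 5)⁻¹ ≤ 32 * h2 (u - b) := by
          rw [hh2r, ← div_eq_mul_inv, le_div_iff₀ (by positivity), inv_mul_eq_div,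
            div_le_iff₀ (by positivity)]
          nlinarith
        rw [hG]; dsimp only
        nlinarith [hmain, e3]
  have hmono := integral_mono_of_nonneg
    (Filter.Eventually.of_forall fun u : E3 => by positivity) hGint hle
  have hG_int_eq : ∫ u, G u = (∫ v, h1 v) + 48 * ∫ v : E3, h2 v := by
    have hsplit : (∫ u : E3, G u)
        = (∫ u : E3, h1 (u - b)) + ∫ u : E3, (16 * h2 u + 32 * h2 (u - b)) :=
      integral_add hint1 ((hint2.const_mul 16).add (hint3.const_mul 32))
    have hsplit2 : (∫ u : E3, (16 * h2 u + 32 * h2 (u - b)))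
        = (∫ u : E3, 16 * h2 u) + ∫ u : E3, 32 * h2 (u - b) :=
      integral_add (hint2.const_mul 16) (hint3.const_mul 32)
    rw [hsplit, hsplit2, integral_const_mul, integral_const_mul,
      integral_sub_right_eq_self h1 b, integral_sub_right_eq_self h2 b]
    ring
  calc ∫ u : E3, ((‖u - b‖ ^ 2 + σ ^ 2)⁻¹ * ((Real.sqrt (‖u‖ ^ 2 + 1)) ^ 3)⁻¹)
      ≤ ∫ u, G u := hmono
    _ = C0 := by rw [hG_int_eq]; rfl

end GreenAux

open GreenAux

/-- There is a constant `C > 0` such that for every `a ∈ ℝ⁴₊` with `d_a = a₄ > 0`, the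
Neumann Green's function `G(x,y) = |x−y|⁻² + |x̄−y|⁻²` of the half-space satisfies
`∫_{∂ℝ⁴₊} G(x,y) |a−x|⁻³ dx ≤ C/d_a²` for all `y ∈ ℝ⁴₊`, the integral being with respect
to three-dimensional Lebesgue measure on the boundary (where `x̄ = x` on the boundary, so
`G(x,y) = |x−y|⁻² + |x−ȳ|⁻² = 2|x−y|⁻²` there, `ȳ` denoting the reflection of `y`). -/
theorem green_boundary_integral_bound :
    ∃ C > (0 : ℝ), ∀ a y ybar : EuclideanSpace ℝ (Fin 4), 0 < a 3 → 0 < y 3 →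
      ybar 3 = -(y 3) → (∀ i : Fin 4, i ≠ 3 → ybar i = y i) →
      (∫ x : EuclideanSpace ℝ (Fin 3),
          ((‖boundaryEmb x - y‖ ^ 2)⁻¹ + (‖boundaryEmb x - ybar‖ ^ 2)⁻¹) *
            (‖a - boundaryEmb x‖ ^ 3)⁻¹)
        ≤ C / (a 3) ^ 2 := by
  refine ⟨2 * C0 + 1, by nlinarith [C0_nonneg], ?_⟩
  intro a y ybar ha hy h3 hcoord
  set t := a 3 with hta
  set s := y 3 with hts
  set p := proj a with htp
  set q := proj y with htq
  have ht : 0 < t := ha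
  have hqbar : proj ybar = q := by
    rw [htq]
    unfold proj
    congr 1
    funext i
    refine hcoord i.castSucc (Fin.ne_of_val_ne ?_)
    simp [Fin.coe_castSucc]
    omega
  set F : E3 → ℝ := fun x =>
    2 * ((‖x - q‖ ^ 2 + s ^ 2)⁻¹ * ((Real.sqrt (‖x - p‖ ^ 2 + t ^ 2)) ^ 3)⁻¹) with hF
  have hcong : ∀ x : E3,
      ((‖boundaryEmb x - y‖ ^ 2)⁻¹ + (‖boundaryEmb x - ybar‖ ^ 2)⁻¹) *
        (‖a - boundaryEmb x‖ ^ 3)⁻¹ = F x := by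
    intro x
    have e1 := norm_boundaryEmb_sub_sq x y
    have e2 := norm_boundaryEmb_sub_sq x ybar
    rw [hqbar, h3] at e2
    have e3 : ‖a - boundaryEmb x‖ = Real.sqrt (‖x - p‖ ^ 2 + t ^ 2) := by
      rw [norm_sub_rev, ← Real.sqrt_sq (norm_nonneg (boundaryEmb x - a)),
        norm_boundaryEmb_sub_sq x a]
    rw [hF]
    dsimp only
    rw [e1, e2, e3, neg_sq]
    ring
  rw [integral_congr_ae (Filter.Eventually.of_forall hcong)]
  -- change of variables
  set b := t⁻¹ • (q - p) with hb
  set σ := s / t with hσ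
  have hpt : ∀ u : E3, F (t • u + p)
      = (2 * (t ^ 2)⁻¹ * (t ^ 3)⁻¹) *
        ((‖u - b‖ ^ 2 + σ ^ 2)⁻¹ * ((Real.sqrt (‖u‖ ^ 2 + 1)) ^ 3)⁻¹) := by
    intro u
    have harg : t • u + p - q = t • (u - b) := by
      rw [hb, smul_sub, smul_inv_smul₀ ht.ne']
      abel
    have hn1 : ‖t • u + p - q‖ ^ 2 + s ^ 2 = t ^ 2 * (‖u - b‖ ^ 2 + σ ^ 2) := by
      rw [harg, norm_smul, Real.norm_eq_abs, abs_of_pos ht, mul_pow, hσ]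
      field_simp
    have hn2 : Real.sqrt (‖t • u + p - p‖ ^ 2 + t ^ 2) = t * Real.sqrt (‖u‖ ^ 2 + 1) := by
      rw [add_sub_cancel_right, norm_smul, Real.norm_eq_abs, abs_of_pos ht, mul_pow,
        show t ^ 2 * ‖u‖ ^ 2 + t ^ 2 = t ^ 2 * (‖u‖ ^ 2 + 1) by ring,
        Real.sqrt_mul (sq_nonneg t), Real.sqrt_sq ht.le]
    rw [hF]
    dsimp only
    rw [hn1, hn2, mul_pow, mul_inv, mul_inv]
    ring
  have hscale : (∫ x : E3, F x) = t ^ 3 * ∫ u : E3, F (t • u + p) := by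
    have h1 : (∫ u : E3, F (t • u + p)) = |((t ^ finrank ℝ E3)⁻¹ : ℝ)| • ∫ x : E3, F (x + p) :=
      Measure.integral_comp_smul volume (fun x => F (x + p)) t
    rw [integral_add_right_eq_self F p] at h1
    rw [h1, finrank_euclideanSpace_fin, abs_of_pos (by positivity), smul_eq_mul]
    field_simp
  rw [hscale, integral_congr_ae (Filter.Eventually.of_forall hpt), integral_const_mul]
  have hkey := key b σ
  have hc : t ^ 3 * ((2 * (t ^ 2)⁻¹ * (t ^ 3)⁻¹) *
      ∫ u : E3, ((‖u - b‖ ^ 2 + σ ^ 2)⁻¹ * ((Real.sqrt (‖u‖ ^ 2 + 1)) ^ 3)⁻¹))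
      = 2 * (t ^ 2)⁻¹ *
        ∫ u : E3, ((‖u - b‖ ^ 2 + σ ^ 2)⁻¹ * ((Real.sqrt (‖u‖ ^ 2 + 1)) ^ 3)⁻¹) := by
    field_simp
  rw [hc, div_eq_mul_inv]
  have h2t : (0:ℝ) < (t ^ 2)⁻¹ := by positivity
  calc 2 * (t ^ 2)⁻¹ * ∫ u : E3, ((‖u - b‖ ^ 2 + σ ^ 2)⁻¹ * ((Real.sqrt (‖u‖ ^ 2 + 1)) ^ 3)⁻¹)
      ≤ 2 * (t ^ 2)⁻¹ * C0 := by
        apply mul_le_mul_of_nonneg_left hkey (by positivity)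
    _ ≤ (2 * C0 + 1) * (t ^ 2)⁻¹ := by nlinarith [C0_nonneg]
end

section
/- Let λ_i ≥ λ_j > 0 and ε > 0, and set ε_{ij} = (λ_i/λ_j + λ_j/λ_i + λ_i λ_j t)^{−1} for some t ≥ 0. If (λ_j/λ_i) ε_{ij} ≤ ε and (λ_i/λ_j) ε_{ij} ≤ 1/2 + ε with ε ≤ 1/8, then −2 λ_i ∂ε_{ij}/∂λ_i − λ_j ∂ε_{ij}/∂λ_j ≥ (1 − 4ε) ε_{ij}. -/
/-- The bubble interaction `ε_{ij} = (λ_i/λ_j + λ_j/λ_i + λ_i λ_j t)⁻¹`. -/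
noncomputable def epsInteraction (li lj t : ℝ) : ℝ :=
  (li / lj + lj / li + li * lj * t)⁻¹

/-
Writing `ε = ε_{ij}`, one has `λ_i ∂ε/∂λ_i = -ε² (λ_i/λ_j - λ_j/λ_i + λ_iλ_j t)` and symmetrically
in `j`, so `-2λ_i ∂ε/∂λ_i - λ_j ∂ε/∂λ_j = ε² (λ_i/λ_j - λ_j/λ_i + 3λ_iλ_j t)`. Since `ε⁻¹` is the
sum of the three terms, this equals `ε - 2 ((λ_j/λ_i) ε) ε + 2 λ_iλ_j t ε² ≥ (1 - 2ε₀) ε` whenever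
`(λ_j/λ_i) ε ≤ ε₀`.
-/

theorem epsInteraction_comm (li lj t : ℝ) :
    epsInteraction li lj t = epsInteraction lj li t := by
  unfold epsInteraction
  ring_nf

theorem epsInteraction_mul_denom_eq_one (li lj t : ℝ) (hε : epsInteraction li lj t ≠ 0) :
    epsInteraction li lj t * (li / lj + lj / li + li * lj * t) = 1 :=
  inv_mul_cancel₀ (inv_eq_zero.not.mp hε)

theorem epsInteraction_pos {li lj t : ℝ} (hi : 0 < li) (hj : 0 < lj) (ht : 0 ≤ t) :
    0 < epsInteraction li lj t := by
  unfold epsInteraction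
  positivity

theorem hasDerivAt_epsInteraction_left (li lj t : ℝ) (hi : li ≠ 0)
    (hε : epsInteraction li lj t ≠ 0) :
    HasDerivAt (fun l => epsInteraction l lj t)
      (-epsInteraction li lj t ^ 2 * (li / lj - lj / li + li * lj * t) / li) li := by
  have hD := (((hasDerivAt_id' li).div_const lj).fun_add ((hasDerivAt_inv hi).const_mul lj)).fun_add
    (((hasDerivAt_id' li).mul_const lj).mul_const t)
  refine (hD.fun_inv (inv_eq_zero.not.mp hε)).congr_deriv ?_
  rw [epsInteraction]
  field_simp
  ring

theorem hasDerivAt_epsInteraction_right (li lj t : ℝ) (hj : lj ≠ 0)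
    (hε : epsInteraction li lj t ≠ 0) :
    HasDerivAt (fun l => epsInteraction li l t)
      (-epsInteraction li lj t ^ 2 * (lj / li - li / lj + li * lj * t) / lj) lj := by
  simp only [epsInteraction_comm li] at hε ⊢
  convert hasDerivAt_epsInteraction_left lj li t hj hε using 2
  ring

theorem interaction_derivative_lower_bound_general (li lj t eps : ℝ)
    (hj : 0 < lj) (hij : lj ≤ li) (ht : 0 ≤ t)
    (h1 : (lj / li) * epsInteraction li lj t ≤ eps) :
    -2 * li * deriv (fun l => epsInteraction l lj t) li
        - lj * deriv (fun l => epsInteraction li l t) lj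
      ≥ (1 - 4 * eps) * epsInteraction li lj t := by
  have hi : 0 < li := hj.trans_le hij
  have hε := epsInteraction_pos hi hj ht
  have hinv := epsInteraction_mul_denom_eq_one li lj t hε.ne'
  have hc : 0 ≤ li * lj * t := by positivity
  rw [(hasDerivAt_epsInteraction_left li lj t hi.ne' hε.ne').deriv,
    (hasDerivAt_epsInteraction_right li lj t hj.ne' hε.ne').deriv]
  generalize epsInteraction li lj t = ε at *
  have heps : 0 ≤ eps := (by positivity : 0 ≤ lj / li * ε).trans h1
  calc -2 * li * (-ε ^ 2 * (li / lj - lj / li + li * lj * t) / li)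
        - lj * (-ε ^ 2 * (lj / li - li / lj + li * lj * t) / lj)
      = ε * (ε * (li / lj + lj / li + li * lj * t))
          - 2 * (lj / li * ε) * ε + 2 * (li * lj * t) * ε ^ 2 := by
        field_simp
        ring
    _ = ε - 2 * (lj / li * ε) * ε + 2 * (li * lj * t) * ε ^ 2 := by rw [hinv, mul_one]
    _ ≥ ε - 2 * eps * ε := by nlinarith [mul_le_mul_of_nonneg_right h1 hε.le]
    _ ≥ (1 - 4 * eps) * ε := by nlinarith

/-- If `λ_i ≥ λ_j > 0`, `t ≥ 0`, `0 < ε ≤ 1/8`, `(λ_j/λ_i) ε_{ij} ≤ ε` and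
`(λ_i/λ_j) ε_{ij} ≤ 1/2 + ε`, then
`−2 λ_i ∂ε_{ij}/∂λ_i − λ_j ∂ε_{ij}/∂λ_j ≥ (1 − 4ε) ε_{ij}`. -/
theorem interaction_derivative_lower_bound (li lj t eps : ℝ)
    (hj : 0 < lj) (hij : lj ≤ li) (ht : 0 ≤ t) (heps : 0 < eps) (heps' : eps ≤ 1 / 8)
    (h1 : (lj / li) * epsInteraction li lj t ≤ eps)
    (h2 : (li / lj) * epsInteraction li lj t ≤ 1 / 2 + eps) :
    -2 * li * deriv (fun l => epsInteraction l lj t) li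
        - lj * deriv (fun l => epsInteraction li l t) lj
      ≥ (1 - 4 * eps) * epsInteraction li lj t :=
  interaction_derivative_lower_bound_general li lj t eps hj hij ht h1
end
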